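/- Under the admissible parameter assumptions, there exists a constant K ≥ 0 such that ⟨u, R(u)⟩ ≤ (K/2)(‖u‖² + 1) for all u ∈ S_d^+, where R(u) = −2uαu + B^⊤(u) + γ − ∫_{S_d^+\{0}} (e^{−⟨u,ξ⟩} − 1 + ⟨χ(ξ),u⟩)/(‖ξ‖² ∧ 1) μ(dξ). -/

import Mathlib

/-! The diffusion term gives `-2 tr(u u α u) ≤ 0`, and the drift and killing terms are
`O(‖u‖²)` and `O(‖u‖)`. The jump term `⟨u, ∫ ⋯ dμ⟩` is the integral of the integrand against
`ν = ∑ u_ij μ_ij`, a nonnegative measure (as `u` and every `μ(E)` are positive semidefinite) of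
mass `⟨u, μ(S_d)⟩ = O(‖u‖)`. On `S_d^+` the integrand is `≥ 0` where `‖ξ‖ ≤ 1` and equals
`e^{-⟨u,ξ⟩} - 1 ≥ -1` beyond, so `-⟨u, ∫ ⋯ dμ⟩ ≤ ν(S_d) = O(‖u‖)`. -/

open MeasureTheory

noncomputable instance matrixMeasurableSpace (d : ℕ) :
    MeasurableSpace (Matrix (Fin d) (Fin d) ℝ) := borel _

instance matrixBorelSpace (d : ℕ) : BorelSpace (Matrix (Fin d) (Fin d) ℝ) := ⟨rfl⟩

attribute [local instance] Matrix.normedAddCommGroup Matrix.normedSpace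

/-- The norm `‖x‖ = √tr(x xᵀ)` induced by the trace inner product `⟨x,y⟩ = tr(xy)`. -/
noncomputable def matNorm {d : ℕ} (x : Matrix (Fin d) (Fin d) ℝ) : ℝ :=
  Real.sqrt (x * x.transpose).trace

/-- The truncation function `χ(ξ) = ξ·1_{‖ξ‖ ≤ 1}`. -/
noncomputable def trunc {d : ℕ} (ξ : Matrix (Fin d) (Fin d) ℝ) :
    Matrix (Fin d) (Fin d) ℝ :=
  if matNorm ξ ≤ 1 then ξ else 0

/-- Integral of `f` against a finite signed measure, via the Jordan decomposition. -/
noncomputable def sIntegral {X : Type*} [MeasurableSpace X]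
    (s : SignedMeasure X) (f : X → ℝ) : ℝ :=
  ∫ x, f x ∂s.toJordanDecomposition.posPart -
    ∫ x, f x ∂s.toJordanDecomposition.negPart

/-- The kernel `M(x,dξ) = ⟨x, μ(dξ)⟩/(‖ξ‖² ∧ 1)`: the signed measure
`⟨x, μ(dξ)⟩ = ∑_{ij} x_{ij} μ_{ij}(dξ)` is nonnegative for positive semidefinite `x`
(so it coincides with the positive part of its Jordan decomposition), divided by the
density `‖ξ‖² ∧ 1`. -/
noncomputable def Mker {d : ℕ}
    (μ : Fin d → Fin d → SignedMeasure (Matrix (Fin d) (Fin d) ℝ))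
    (x : Matrix (Fin d) (Fin d) ℝ) : Measure (Matrix (Fin d) (Fin d) ℝ) :=
  ((∑ i : Fin d, ∑ j : Fin d, x i j • μ i j).toJordanDecomposition.posPart).withDensity
    fun ξ => ENNReal.ofReal (1 / min (matNorm ξ ^ 2) 1)

/-- The function `R` of the generalized Riccati equation:
`R(u) = −2uαu + B^⊤(u) + γ − ∫_{S_d^+∖{0}} (e^{−⟨u,ξ⟩} − 1 + ⟨χ(ξ),u⟩)/(‖ξ‖² ∧ 1) μ(dξ)`,
the integral being taken entrywise against the finite signed measures `μ_{ij}`. -/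
noncomputable def Rmat {d : ℕ} (α γ : Matrix (Fin d) (Fin d) ℝ)
    (Bt : Matrix (Fin d) (Fin d) ℝ →ₗ[ℝ] Matrix (Fin d) (Fin d) ℝ)
    (μ : Fin d → Fin d → SignedMeasure (Matrix (Fin d) (Fin d) ℝ))
    (u : Matrix (Fin d) (Fin d) ℝ) : Matrix (Fin d) (Fin d) ℝ :=
  (-2 : ℝ) • (u * α * u) + Bt u + γ -
    Matrix.of fun i j => sIntegral (μ i j) fun ξ =>
      (Real.exp (-(u * ξ).trace) - 1 + ((trunc ξ) * u).trace) / min (matNorm ξ ^ 2) 1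

namespace MeasureTheory.SignedMeasure

variable {X : Type*} [MeasurableSpace X]

theorem toJordanDecomposition_parts_apply_eq_zero (s : SignedMeasure X) {T : Set X}
    (hT : MeasurableSet T) (h : ∀ E, MeasurableSet E → E ⊆ T → s E = 0) :
    s.toJordanDecomposition.posPart T = 0 ∧ s.toJordanDecomposition.negPart T = 0 := by
  obtain ⟨i, hi, hpos, hneg, hp, hn⟩ := s.toJordanDecomposition_spec
  rw [hp, hn, toMeasureOfZeroLE_apply _ hpos hi hT, toMeasureOfLEZero_apply _ hneg hi.compl hT]
  simp [h _ (hi.inter hT) Set.inter_subset_right, h _ (hi.compl.inter hT) Set.inter_subset_right]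

end MeasureTheory.SignedMeasure

open MeasureTheory SignedMeasure

section sIntegral

variable {X : Type*} [MeasurableSpace X]

theorem sIntegral_indicator (s : SignedMeasure X) {T : Set X} (hT : MeasurableSet T)
    (h : ∀ E, MeasurableSet E → E ⊆ Tᶜ → s E = 0) (f : X → ℝ) :
    sIntegral s (T.indicator f) = sIntegral s f := by
  obtain ⟨hpos, hneg⟩ := s.toJordanDecomposition_parts_apply_eq_zero hT.compl h
  rw [sIntegral, sIntegral, integral_indicator hT, integral_indicator hT,
    Measure.restrict_eq_self_of_ae_mem (mem_ae_iff.mpr hpos),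
    Measure.restrict_eq_self_of_ae_mem (mem_ae_iff.mpr hneg)]

theorem sIntegral_eq_integral_sub_integral {g : X → ℝ}
    (hg : ∀ (m : Measure X) [IsFiniteMeasure m], Integrable g m) {s : SignedMeasure X}
    (m₁ m₂ : Measure X) [IsFiniteMeasure m₁] [IsFiniteMeasure m₂]
    (h : s = m₁.toSignedMeasure - m₂.toSignedMeasure) :
    sIntegral s g = ∫ x, g x ∂m₁ - ∫ x, g x ∂m₂ := by
  set j := s.toJordanDecomposition
  have hj : j.posPart + m₂ = m₁ + j.negPart := by
    rw [← Measure.toSignedMeasure_eq_toSignedMeasure_iff, Measure.toSignedMeasure_add,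
      Measure.toSignedMeasure_add, ← sub_eq_sub_iff_add_eq_add, ← h]
    exact s.toSignedMeasure_toJordanDecomposition
  have := congrArg (fun m => ∫ x, g x ∂m) hj
  simp only [integral_add_measure (hg _) (hg _)] at this
  rw [sIntegral]
  linarith

theorem sIntegral_add {g : X → ℝ}
    (hg : ∀ (m : Measure X) [IsFiniteMeasure m], Integrable g m) (s t : SignedMeasure X) :
    sIntegral (s + t) g = sIntegral s g + sIntegral t g := by
  rw [sIntegral_eq_integral_sub_integral hg
    (s.toJordanDecomposition.posPart + t.toJordanDecomposition.posPart)
    (s.toJordanDecomposition.negPart + t.toJordanDecomposition.negPart), sIntegral, sIntegral,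
    integral_add_measure (hg _) (hg _), integral_add_measure (hg _) (hg _)]
  · ring
  · simp only [Measure.toSignedMeasure_add]
    conv_lhs => rw [← s.toSignedMeasure_toJordanDecomposition,
      ← t.toSignedMeasure_toJordanDecomposition]
    simp only [JordanDecomposition.toSignedMeasure]
    abel

theorem sIntegral_smul (c : ℝ) (s : SignedMeasure X) (f : X → ℝ) :
    sIntegral (c • s) f = c * sIntegral s f := by
  rcases le_or_gt 0 c with hc | hc
  · rw [sIntegral, sIntegral, SignedMeasure.toJordanDecomposition_smul_real,
      JordanDecomposition.real_smul_posPart_nonneg _ _ hc,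
      JordanDecomposition.real_smul_negPart_nonneg _ _ hc,
      integral_smul_nnreal_measure, integral_smul_nnreal_measure]
    simp only [NNReal.smul_def, Real.coe_toNNReal _ hc, smul_eq_mul]
    ring
  · rw [sIntegral, sIntegral, SignedMeasure.toJordanDecomposition_smul_real,
      JordanDecomposition.real_smul_posPart_neg _ _ hc,
      JordanDecomposition.real_smul_negPart_neg _ _ hc,
      integral_smul_nnreal_measure, integral_smul_nnreal_measure]
    simp only [NNReal.smul_def, Real.coe_toNNReal _ (neg_nonneg.mpr hc.le), smul_eq_mul]
    ring

noncomputable def sIntegralₗ (g : X → ℝ)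
    (hg : ∀ (m : Measure X) [IsFiniteMeasure m], Integrable g m) : SignedMeasure X →ₗ[ℝ] ℝ where
  toFun s := sIntegral s g
  map_add' := sIntegral_add hg
  map_smul' c s := sIntegral_smul c s g

@[simp]
theorem sIntegralₗ_apply (g : X → ℝ) (hg : ∀ (m : Measure X) [IsFiniteMeasure m], Integrable g m)
    (s : SignedMeasure X) : sIntegralₗ g hg s = sIntegral s g :=
  rfl

theorem neg_apply_univ_le_sIntegral {g : X → ℝ}
    (hg : ∀ (m : Measure X) [IsFiniteMeasure m], Integrable g m) (hg₁ : ∀ x, -1 ≤ g x)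
    {s : SignedMeasure X} (hs : ∀ E, MeasurableSet E → 0 ≤ s E) :
    -s Set.univ ≤ sIntegral s g := by
  have hs₀ : 0 ≤[Set.univ] s :=
    (VectorMeasure.restrict_le_restrict_iff _ _ MeasurableSet.univ).mpr
      fun E hE _ => by simpa using hs E hE
  set m := s.toMeasureOfZeroLE Set.univ MeasurableSet.univ hs₀
  rw [sIntegral_eq_integral_sub_integral hg m 0 (by simp [m, toMeasureOfZeroLE_toSignedMeasure]),
    integral_zero_measure, sub_zero]
  calc -s Set.univ = ∫ _, (-1 : ℝ) ∂m := by
        simp [m, measureReal_def,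
          toMeasureOfZeroLE_apply _ hs₀ MeasurableSet.univ MeasurableSet.univ]
    _ ≤ ∫ x, g x ∂m := integral_mono (integrable_const _) (hg m) hg₁

end sIntegral

namespace Matrix

variable {n : Type*} [Fintype n]

theorem trace_mul_le_card_sq_mul_norm_mul_norm (A B : Matrix n n ℝ) :
    (A * B).trace ≤ Fintype.card n ^ 2 * ‖A‖ * ‖B‖ := by
  calc (A * B).trace = ∑ i, ∑ j, A i j * B j i := by simp [trace, mul_apply]
    _ ≤ ∑ _i : n, ∑ _j : n, ‖A‖ * ‖B‖ := by
        refine Finset.sum_le_sum fun i _ => Finset.sum_le_sum fun j _ => ?_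
        calc A i j * B j i ≤ ‖A i j‖ * ‖B j i‖ := by
              rw [← norm_mul]; exact Real.le_norm_self _
          _ ≤ ‖A‖ * ‖B‖ := by
              gcongr <;> exact norm_entry_le_entrywise_sup_norm _
    _ = Fintype.card n ^ 2 * ‖A‖ * ‖B‖ := by simp; ring

theorem IsSymm.trace_mul_of {α : Type*} [NonUnitalNonAssocSemiring α] {u : Matrix n n α}
    (hu : u.IsSymm) (c : n → n → α) : (u * of c).trace = ∑ i, ∑ j, u i j * c i j := by
  simp only [trace, diag_apply, mul_apply, of_apply]
  rw [Finset.sum_comm]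
  simp_rw [hu.apply]

open scoped MatrixOrder ComplexOrder in
theorem PosSemidef.trace_mul_nonneg {𝕜 : Type*} [RCLike 𝕜] {A B : Matrix n n 𝕜}
    (hA : A.PosSemidef) (hB : B.PosSemidef) : 0 ≤ (A * B).trace := by
  classical
  obtain ⟨C, rfl⟩ : ∃ C : Matrix n n 𝕜, A = Cᴴ * C :=
    ⟨CFC.sqrt A, by
      change A = star (CFC.sqrt A) * CFC.sqrt A
      rw [(CFC.sqrt_nonneg A).isSelfAdjoint.star_eq, CFC.sqrt_mul_sqrt_self A hA.nonneg]⟩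
  rw [Matrix.mul_assoc, trace_mul_comm]
  exact (hB.mul_mul_conjTranspose_same C).trace_nonneg

open scoped ComplexOrder in
theorem isClosed_setOf_posSemidef {𝕜 : Type*} [RCLike 𝕜] :
    IsClosed {A : Matrix n n 𝕜 | A.PosSemidef} := by
  have : {A : Matrix n n 𝕜 | A.PosSemidef} =
      {A | Aᴴ = A} ∩ ⋂ v : n → 𝕜, {A | 0 ≤ star v ⬝ᵥ A *ᵥ v} := by
    ext A
    simp only [Set.mem_inter_iff, Set.mem_iInter, Set.mem_ofPred_eq]
    exact ⟨fun h => ⟨h.1, h.dotProduct_mulVec_nonneg⟩,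
      fun h => PosSemidef.of_dotProduct_mulVec_nonneg h.1 h.2⟩
  rw [this]
  exact (isClosed_eq (by fun_prop) continuous_id).inter
    (isClosed_iInter fun v => isClosed_le continuous_const (by fun_prop))

end Matrix

variable {d : ℕ}

theorem matNorm_nonneg (x : Matrix (Fin d) (Fin d) ℝ) : 0 ≤ matNorm x := Real.sqrt_nonneg _

theorem abs_apply_le_matNorm (x : Matrix (Fin d) (Fin d) ℝ) (i j : Fin d) :
    |x i j| ≤ matNorm x := by
  refine Real.abs_le_sqrt ?_
  calc x i j ^ 2 ≤ ∑ k, x i k ^ 2 :=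
        Finset.single_le_sum (fun k _ => sq_nonneg (x i k)) (Finset.mem_univ j)
    _ ≤ ∑ l, ∑ k, x l k ^ 2 :=
        Finset.single_le_sum (f := fun l => ∑ k, x l k ^ 2)
          (fun l _ => Finset.sum_nonneg fun k _ => sq_nonneg (x l k)) (Finset.mem_univ i)
    _ = (x * x.transpose).trace := by simp [Matrix.trace, Matrix.mul_apply, sq]

theorem norm_le_matNorm (x : Matrix (Fin d) (Fin d) ℝ) : ‖x‖ ≤ matNorm x :=
  (Matrix.norm_le_iff (matNorm_nonneg x)).mpr fun i j => abs_apply_le_matNorm x i j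

theorem Real.exp_neg_sub_one_add_le_sq {t : ℝ} (ht : 0 ≤ t) : Real.exp (-t) - 1 + t ≤ t ^ 2 := by
  have hpos : 0 < t + 1 := by linarith
  have h₁ : Real.exp (-t) ≤ (t + 1)⁻¹ := by
    rw [Real.exp_neg]
    exact inv_anti₀ hpos (Real.add_one_le_exp t)
  have h₂ : (t + 1)⁻¹ ≤ 1 - t + t ^ 2 := by
    rw [inv_le_iff_one_le_mul₀ hpos]
    nlinarith [pow_nonneg ht 3]
  linarith

noncomputable def jumpIntegrand (u ξ : Matrix (Fin d) (Fin d) ℝ) : ℝ :=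
  (Real.exp (-(u * ξ).trace) - 1 + ((trunc ξ) * u).trace) / min (matNorm ξ ^ 2) 1

noncomputable def jumpTerm (μ : Fin d → Fin d → SignedMeasure (Matrix (Fin d) (Fin d) ℝ))
    (u : Matrix (Fin d) (Fin d) ℝ) : Matrix (Fin d) (Fin d) ℝ :=
  Matrix.of fun i j => sIntegral (μ i j) (jumpIntegrand u)

theorem jumpIntegrand_of_matNorm_le_one (u : Matrix (Fin d) (Fin d) ℝ)
    {ξ : Matrix (Fin d) (Fin d) ℝ} (h : matNorm ξ ≤ 1) :
    jumpIntegrand u ξ = (Real.exp (-(u * ξ).trace) - 1 + (u * ξ).trace) / matNorm ξ ^ 2 := by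
  have : matNorm ξ ^ 2 ≤ 1 := pow_le_one₀ (matNorm_nonneg ξ) h
  rw [jumpIntegrand, trunc, if_pos h, min_eq_left this, Matrix.trace_mul_comm]

theorem jumpIntegrand_of_one_lt_matNorm (u : Matrix (Fin d) (Fin d) ℝ)
    {ξ : Matrix (Fin d) (Fin d) ℝ} (h : 1 < matNorm ξ) :
    jumpIntegrand u ξ = Real.exp (-(u * ξ).trace) - 1 := by
  have : 1 ≤ matNorm ξ ^ 2 := one_le_pow₀ h.le
  rw [jumpIntegrand, trunc, if_neg h.not_ge, min_eq_right this]
  simp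

theorem measurable_jumpIntegrand (u : Matrix (Fin d) (Fin d) ℝ) :
    Measurable (jumpIntegrand u) := by
  have hnorm : Continuous (matNorm (d := d)) := by unfold matNorm; fun_prop
  have htrunc : Measurable fun ξ : Matrix (Fin d) (Fin d) ℝ => ((trunc ξ) * u).trace := by
    simp only [trunc, apply_ite (fun A => (A * u).trace), Matrix.zero_mul, Matrix.trace_zero]
    exact Measurable.ite (measurableSet_le hnorm.measurable measurable_const)
      (by fun_prop) measurable_const
  unfold jumpIntegrand
  fun_prop

theorem neg_one_le_jumpIntegrand {u ξ : Matrix (Fin d) (Fin d) ℝ} (hu : u.PosSemidef)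
    (hξ : ξ.PosSemidef) : -1 ≤ jumpIntegrand u ξ := by
  have ht := hu.trace_mul_nonneg hξ
  rcases le_or_gt (matNorm ξ) 1 with h | h
  · rw [jumpIntegrand_of_matNorm_le_one u h]
    have := Real.add_one_le_exp (-(u * ξ).trace)
    have : 0 ≤ (Real.exp (-(u * ξ).trace) - 1 + (u * ξ).trace) / matNorm ξ ^ 2 :=
      div_nonneg (by linarith) (sq_nonneg _)
    linarith
  · rw [jumpIntegrand_of_one_lt_matNorm u h]
    linarith [Real.exp_pos (-(u * ξ).trace)]

theorem jumpIntegrand_le {u ξ : Matrix (Fin d) (Fin d) ℝ} (hu : u.PosSemidef)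
    (hξ : ξ.PosSemidef) : jumpIntegrand u ξ ≤ (d ^ 2 * ‖u‖) ^ 2 := by
  have ht := hu.trace_mul_nonneg hξ
  rcases le_or_gt (matNorm ξ) 1 with h | h
  · rw [jumpIntegrand_of_matNorm_le_one u h]
    rcases (matNorm_nonneg ξ).eq_or_lt with h0 | h0
    · rw [← h0, zero_pow two_ne_zero, div_zero]; positivity
    rw [div_le_iff₀ (by positivity)]
    have htξ : (u * ξ).trace ≤ d ^ 2 * ‖u‖ * matNorm ξ := by
      have := (u.trace_mul_le_card_sq_mul_norm_mul_norm ξ)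
      simp only [Fintype.card_fin] at this
      exact this.trans (by gcongr; exact norm_le_matNorm ξ)
    calc Real.exp (-(u * ξ).trace) - 1 + (u * ξ).trace ≤ (u * ξ).trace ^ 2 :=
          Real.exp_neg_sub_one_add_le_sq ht
      _ ≤ (d ^ 2 * ‖u‖ * matNorm ξ) ^ 2 := by gcongr
      _ = (d ^ 2 * ‖u‖) ^ 2 * matNorm ξ ^ 2 := by ring
  · rw [jumpIntegrand_of_one_lt_matNorm u h]
    have : Real.exp (-(u * ξ).trace) ≤ 1 := Real.exp_le_one_iff.mpr (by linarith)
    nlinarith [sq_nonneg (d ^ 2 * ‖u‖)]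

theorem neg_trace_mul_jumpTerm_le
    {μ : Fin d → Fin d → SignedMeasure (Matrix (Fin d) (Fin d) ℝ)}
    (hμsupp : ∀ (i j : Fin d) (E : Set (Matrix (Fin d) (Fin d) ℝ)), MeasurableSet E →
      E ⊆ {ξ : Matrix (Fin d) (Fin d) ℝ | ξ.PosSemidef}ᶜ → μ i j E = 0)
    (hμpsd : ∀ E : Set (Matrix (Fin d) (Fin d) ℝ), MeasurableSet E →
      Matrix.PosSemidef (Matrix.of fun i j => μ i j E))
    {u : Matrix (Fin d) (Fin d) ℝ} (hu : u.PosSemidef) :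
    -(u * jumpTerm μ u).trace ≤ d ^ 2 * ‖u‖ * ‖Matrix.of fun i j => μ i j Set.univ‖ := by
  set T := {ξ : Matrix (Fin d) (Fin d) ℝ | ξ.PosSemidef}
  have hT : MeasurableSet T := Matrix.isClosed_setOf_posSemidef.measurableSet
  -- Cut off outside `S_d^+`, the integrand is bounded, so `sIntegral` is linear in the measure.
  set g := T.indicator (jumpIntegrand u)
  have hg_bounds : ∀ ξ, -1 ≤ g ξ ∧ g ξ ≤ (d ^ 2 * ‖u‖) ^ 2 := by
    intro ξ
    by_cases hξ : ξ ∈ T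
    · simpa [g, hξ] using ⟨neg_one_le_jumpIntegrand hu hξ, jumpIntegrand_le hu hξ⟩
    · simp only [g, hξ, not_false_eq_true, Set.indicator_of_notMem]
      exact ⟨by norm_num, by positivity⟩
  have hg : ∀ (m : Measure (Matrix (Fin d) (Fin d) ℝ)) [IsFiniteMeasure m], Integrable g m := by
    intro m _
    refine Integrable.of_bound ((measurable_jumpIntegrand u).indicator hT).aestronglyMeasurable
      (1 + (d ^ 2 * ‖u‖) ^ 2) (ae_of_all _ fun ξ => ?_)
    rw [Real.norm_eq_abs, abs_le]
    constructor <;> nlinarith [hg_bounds ξ]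
  have hu_symm : u.IsSymm := Matrix.isHermitian_iff_isSymm.mp hu.isHermitian
  set ν := ∑ i, ∑ j, u i j • μ i j
  have hν : ∀ E, ν E = (u * Matrix.of fun i j => μ i j E).trace := by
    intro E
    simp only [ν, sum_apply, smul_apply, smul_eq_mul, hu_symm.trace_mul_of]
  have hjump : (u * jumpTerm μ u).trace = sIntegralₗ g hg ν := by
    simp only [jumpTerm, hu_symm.trace_mul_of, ν, map_sum, map_smul, smul_eq_mul,
      sIntegralₗ_apply, g, sIntegral_indicator _ hT (hμsupp _ _)]
  calc -(u * jumpTerm μ u).trace ≤ ν Set.univ := by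
        rw [hjump, neg_le]
        exact neg_apply_univ_le_sIntegral hg (fun ξ => (hg_bounds ξ).1)
          fun E hE => (hν E).symm ▸ hu.trace_mul_nonneg (hμpsd E hE)
    _ ≤ d ^ 2 * ‖u‖ * ‖Matrix.of fun i j => μ i j Set.univ‖ := by
        simpa [hν] using u.trace_mul_le_card_sq_mul_norm_mul_norm _

theorem trace_mul_Rmat (α γ : Matrix (Fin d) (Fin d) ℝ)
    (Bt : Matrix (Fin d) (Fin d) ℝ →ₗ[ℝ] Matrix (Fin d) (Fin d) ℝ)
    (μ : Fin d → Fin d → SignedMeasure (Matrix (Fin d) (Fin d) ℝ))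
    (u : Matrix (Fin d) (Fin d) ℝ) :
    (u * Rmat α γ Bt μ u).trace = -2 * (u * (u * α * u)).trace + (u * Bt u).trace +
      (u * γ).trace - (u * jumpTerm μ u).trace := by
  simp only [Rmat, Matrix.mul_sub, Matrix.mul_add, Matrix.mul_smul, Matrix.trace_sub,
    Matrix.trace_add, Matrix.trace_smul, smul_eq_mul]
  rfl

theorem Riccati_R_linear_growth_bound_general {d : ℕ}
    (α γ : Matrix (Fin d) (Fin d) ℝ)
    (Bt : Matrix (Fin d) (Fin d) ℝ →ₗ[ℝ] Matrix (Fin d) (Fin d) ℝ)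
    (μ : Fin d → Fin d → SignedMeasure (Matrix (Fin d) (Fin d) ℝ))
    (hα : α.PosSemidef)
    (hμsupp : ∀ (i j : Fin d) (E : Set (Matrix (Fin d) (Fin d) ℝ)), MeasurableSet E →
      E ⊆ {ξ : Matrix (Fin d) (Fin d) ℝ | ¬ (ξ.PosSemidef ∧ ξ ≠ 0)} → μ i j E = 0)
    (hμpsd : ∀ E : Set (Matrix (Fin d) (Fin d) ℝ), MeasurableSet E →
      Matrix.PosSemidef (Matrix.of fun i j => μ i j E)) :
    ∃ K : ℝ, 0 ≤ K ∧ ∀ u : Matrix (Fin d) (Fin d) ℝ, u.PosSemidef →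
      (u * Rmat α γ Bt μ u).trace ≤ K / 2 * (matNorm u ^ 2 + 1) := by
  obtain ⟨L, hL, hBt⟩ :=
    SemilinearMapClass.bound_of_continuous Bt (LinearMap.continuous_of_finiteDimensional Bt)
  set M := ‖Matrix.of fun i j => μ i j Set.univ‖
  refine ⟨2 * d ^ 2 * (L + ‖γ‖ + M), by positivity, fun u hu => ?_⟩
  have hdiffusion : 0 ≤ (u * (u * α * u)).trace := by
    refine hu.trace_mul_nonneg ?_
    simpa only [hu.isHermitian.eq] using hα.mul_mul_conjTranspose_same u
  have hdrift : (u * Bt u).trace ≤ d ^ 2 * ‖u‖ * (L * ‖u‖) := by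
    have := u.trace_mul_le_card_sq_mul_norm_mul_norm (Bt u)
    simp only [Fintype.card_fin] at this
    exact this.trans (by gcongr; exact hBt u)
  have hkilling := u.trace_mul_le_card_sq_mul_norm_mul_norm γ
  simp only [Fintype.card_fin] at hkilling
  have hjump := neg_trace_mul_jumpTerm_le
    (fun i j E hE hET => hμsupp i j E hE (hET.trans fun _ hξ h => hξ h.1)) hμpsd hu
  have hnorm : ‖u‖ ≤ matNorm u := norm_le_matNorm u
  have hsq : ‖u‖ ^ 2 ≤ matNorm u ^ 2 + 1 := by nlinarith [norm_nonneg u]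
  have hlin : ‖u‖ ≤ matNorm u ^ 2 + 1 := by nlinarith [sq_nonneg (matNorm u - 1)]
  calc (u * Rmat α γ Bt μ u).trace ≤ d ^ 2 * (L * ‖u‖ ^ 2 + (‖γ‖ + M) * ‖u‖) := by
        rw [trace_mul_Rmat]; nlinarith
    _ ≤ d ^ 2 * (L * (matNorm u ^ 2 + 1) + (‖γ‖ + M) * (matNorm u ^ 2 + 1)) := by gcongr
    _ = 2 * d ^ 2 * (L + ‖γ‖ + M) / 2 * (matNorm u ^ 2 + 1) := by ring

/-- Under the admissible parameter assumptions (diffusion `α ⪰ 0`,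
linear drift `B` with adjoint `B^⊤`, killing `γ ⪰ 0`, and a symmetric matrix
`μ = (μ_{ij})` of finite signed measures supported on `S_d^+∖{0}` whose set values
are positive semidefinite matrices, satisfying the integrability and inward-pointing
drift conditions), there exists a constant `K ≥ 0` such that
`⟨u, R(u)⟩ ≤ (K/2)(‖u‖² + 1)` for all `u ∈ S_d^+`, where `‖·‖` is the norm induced
by the trace inner product. -/
theorem Riccati_R_linear_growth_bound {d : ℕ}
    (α γ : Matrix (Fin d) (Fin d) ℝ)
    (B Bt : Matrix (Fin d) (Fin d) ℝ →ₗ[ℝ] Matrix (Fin d) (Fin d) ℝ)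
    (μ : Fin d → Fin d → SignedMeasure (Matrix (Fin d) (Fin d) ℝ))
    (hα : α.PosSemidef) (hγ : γ.PosSemidef)
    (hBsymm : ∀ x : Matrix (Fin d) (Fin d) ℝ, x.IsSymm → (B x).IsSymm)
    (hBtsymm : ∀ u : Matrix (Fin d) (Fin d) ℝ, u.IsSymm → (Bt u).IsSymm)
    (hadj : ∀ x u : Matrix (Fin d) (Fin d) ℝ, x.IsSymm → u.IsSymm →
      ((B x) * u).trace = (x * (Bt u)).trace)
    (hμsymm : ∀ i j : Fin d, μ i j = μ j i)
    (hμsupp : ∀ (i j : Fin d) (E : Set (Matrix (Fin d) (Fin d) ℝ)), MeasurableSet E →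
      E ⊆ {ξ : Matrix (Fin d) (Fin d) ℝ | ¬ (ξ.PosSemidef ∧ ξ ≠ 0)} → μ i j E = 0)
    (hμpsd : ∀ E : Set (Matrix (Fin d) (Fin d) ℝ), MeasurableSet E →
      Matrix.PosSemidef (Matrix.of fun i j => μ i j E))
    (hμint : ∀ x u : Matrix (Fin d) (Fin d) ℝ, x.PosSemidef → u.PosSemidef →
      (x * u).trace = 0 →
      ∫⁻ ξ, ENNReal.ofReal (((trunc ξ) * u).trace) ∂(Mker μ x) ≠ ⊤)
    (hdrift : ∀ x u : Matrix (Fin d) (Fin d) ℝ, x.PosSemidef → u.PosSemidef →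
      (x * u).trace = 0 →
      0 ≤ ((B x) * u).trace - ∫ ξ, ((trunc ξ) * u).trace ∂(Mker μ x)) :
    ∃ K : ℝ, 0 ≤ K ∧ ∀ u : Matrix (Fin d) (Fin d) ℝ, u.PosSemidef →
      (u * Rmat α γ Bt μ u).trace ≤ K / 2 * (matNorm u ^ 2 + 1) :=
  Riccati_R_linear_growth_bound_general α γ Bt μ hα hμsupp hμpsd
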